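/- For any dataset and any utility function U, the constrained quasilinear waste ∑_{t=1}^T ( sup_{x: p^t·x ≤ p^t·x^t} [U(x) - p^t·x] - [U(x^t) - p^t·x^t] ) is at least ∑_t p^t·(x^t - x^{σ(t)}) for every constrained permutation σ; consequently Q_c ≥ TMP_c. -/
import Mathlib


open Matrix BigOperators

/-- The constrained quasilinear utility waste at observation `t` (valued in `EReal`,
since the supremum of an arbitrary `U` over the budget set may be infinite). -/
noncomputable def cQlWaste {L T : ℕ} (p x : Fin T → Fin L → ℝ)
    (U : (Fin L → ℝ) → ℝ) (t : Fin T) : EReal :=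
  (⨆ y : {y : Fin L → ℝ // (∀ i, 0 ≤ y i) ∧ p t ⬝ᵥ y ≤ p t ⬝ᵥ x t},
      ((U y.1 - p t ⬝ᵥ y.1 : ℝ) : EReal)) -
    ((U (x t) - p t ⬝ᵥ x t : ℝ) : EReal)

lemma ereal_coe_sum {α : Type*} (s : Finset α) (f : α → ℝ) :
    ((∑ t ∈ s, f t : ℝ) : EReal) = ∑ t ∈ s, ((f t : ℝ) : EReal) := by
  induction s using Finset.cons_induction with
  | empty => simp
  | cons a s h ih => simp [Finset.sum_cons, ih]

/-- for every utility function the constrained quasilinear waste dominates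
every constrained money pump value; consequently `Q_c ≥ TMP_c`. -/
theorem constrained_quasilinear_waste_ge_constrained_money_pump
    {L T : ℕ} (p x : Fin T → Fin L → ℝ)
    (hp : ∀ t i, 0 < p t i) (hx : ∀ t i, 0 ≤ x t i) :
    (∀ (U : (Fin L → ℝ) → ℝ) (σ : Equiv.Perm (Fin T)),
      (∀ t, p t ⬝ᵥ x (σ t) ≤ p t ⬝ᵥ x t) →
      ((∑ t, (p t ⬝ᵥ x t - p t ⬝ᵥ x (σ t)) : ℝ) : EReal) ≤ ∑ t, cQlWaste p x U t) ∧
    (⨆ σ : {σ : Equiv.Perm (Fin T) // ∀ t, p t ⬝ᵥ x (σ.1 t) ≤ p t ⬝ᵥ x t},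
        ((∑ t, (p t ⬝ᵥ x t - p t ⬝ᵥ x (σ.1 t)) : ℝ) : EReal)) ≤
      ⨅ U : (Fin L → ℝ) → ℝ, ∑ t, cQlWaste p x U t := by
  have key : ∀ (U : (Fin L → ℝ) → ℝ) (σ : Equiv.Perm (Fin T)),
      (∀ t, p t ⬝ᵥ x (σ t) ≤ p t ⬝ᵥ x t) →
      ((∑ t, (p t ⬝ᵥ x t - p t ⬝ᵥ x (σ t)) : ℝ) : EReal) ≤ ∑ t, cQlWaste p x U t := by
    intro U σ hσ
    have h1 : ∀ t : Fin T,
        (((U (x (σ t)) - p t ⬝ᵥ x (σ t)) - (U (x t) - p t ⬝ᵥ x t) : ℝ) : EReal)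
          ≤ cQlWaste p x U t := by
      intro t
      unfold cQlWaste
      have hle : ((U (x (σ t)) - p t ⬝ᵥ x (σ t) : ℝ) : EReal) ≤
          ⨆ y : {y : Fin L → ℝ // (∀ i, 0 ≤ y i) ∧ p t ⬝ᵥ y ≤ p t ⬝ᵥ x t},
            ((U y.1 - p t ⬝ᵥ y.1 : ℝ) : EReal) :=
        le_iSup (fun y : {y : Fin L → ℝ // (∀ i, 0 ≤ y i) ∧ p t ⬝ᵥ y ≤ p t ⬝ᵥ x t} =>
          ((U y.1 - p t ⬝ᵥ y.1 : ℝ) : EReal)) ⟨x (σ t), fun i => hx _ i, hσ t⟩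
      rw [EReal.coe_sub]
      exact EReal.sub_le_sub hle le_rfl
    have hsum : ((∑ t, ((U (x (σ t)) - p t ⬝ᵥ x (σ t)) - (U (x t) - p t ⬝ᵥ x t)) : ℝ) : EReal)
        ≤ ∑ t, cQlWaste p x U t := by
      rw [ereal_coe_sum]
      exact Finset.sum_le_sum fun t _ => h1 t
    have heq : (∑ t, ((U (x (σ t)) - p t ⬝ᵥ x (σ t)) - (U (x t) - p t ⬝ᵥ x t)) : ℝ)
        = ∑ t, (p t ⬝ᵥ x t - p t ⬝ᵥ x (σ t)) := by
      have : (∑ t, U (x (σ t)) : ℝ) = ∑ t, U (x t) := Equiv.sum_comp σ fun t => U (x t)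
      simp only [Finset.sum_sub_distrib]
      linarith [this]
    rw [← heq]
    exact hsum
  refine ⟨key, ?_⟩
  refine iSup_le fun σ => le_iInf fun U => key U σ.1 σ.2
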